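/- arXiv:1108.4224 — 6 statements merged into one kernel-verified Lean document; each statement's English description precedes it below -/
import Mathlib

section
/- With γ⁽ᵏ⁾ ∈ 𝔽₂[x] defined by γ⁽⁰⁾ = 0, γ⁽¹⁾ = 1, γ⁽ᵏ⁾ = x·γ⁽ᵏ⁻¹⁾ + γ⁽ᵏ⁻²⁾, we have γ⁽²ⁿ⁾ = x·(γ⁽ⁿ⁾)² for all n ≥ 0. -/
/-!
Induct on `n` jointly with the companion identity `γ⁽²ⁿ⁺¹⁾ = (γ⁽ⁿ⁾)² + (γ⁽ⁿ⁺¹⁾)²`.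
Over `𝔽₂` squaring is additive and `a + a = 0`, so one step of the recursion carries the
pair at `n` to the pair at `n + 1`: `γ⁽²ⁿ⁺²⁾ = x((γ⁽ⁿ⁾)² + (γ⁽ⁿ⁺¹⁾)²) + x(γ⁽ⁿ⁾)² = x(γ⁽ⁿ⁺¹⁾)²`
and `γ⁽²ⁿ⁺³⁾ = (xγ⁽ⁿ⁺¹⁾ + γ⁽ⁿ⁾)² + (γ⁽ⁿ⁺¹⁾)²`.
-/

open Polynomial

noncomputable def gam : ℕ → Polynomial (ZMod 2)
  | 0 => 0
  | 1 => 1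
  | (k + 2) => Polynomial.X * gam (k + 1) + gam k

lemma gam_add_two (k : ℕ) : gam (k + 2) = X * gam (k + 1) + gam k := by
  rw [gam]

lemma gam_two_mul_and_two_mul_add_one (n : ℕ) :
    gam (2 * n) = X * gam n ^ 2 ∧ gam (2 * n + 1) = gam n ^ 2 + gam (n + 1) ^ 2 := by
  induction n with
  | zero => simp [gam]
  | succ n ih =>
    obtain ⟨h_even, h_odd⟩ := ih
    have h_even' : gam (2 * (n + 1)) = X * gam (n + 1) ^ 2 := by
      rw [show 2 * (n + 1) = 2 * n + 2 by ring, gam_add_two, h_odd, h_even, mul_add,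
        add_right_comm, CharTwo.add_self_eq_zero, zero_add]
    refine ⟨h_even', ?_⟩
    rw [show 2 * (n + 1) + 1 = (2 * n + 1) + 2 by ring, gam_add_two,
      show 2 * n + 1 + 1 = 2 * (n + 1) by ring, h_even', h_odd, gam_add_two n,
      CharTwo.add_sq, mul_pow]
    ring

theorem gam_two_mul (n : ℕ) :
    gam (2 * n) = Polynomial.X * (gam n) ^ 2 :=
  (gam_two_mul_and_two_mul_add_one n).1
end

section
/- Let q be a prime power. The number of sequences s = (s₁,…,s_n) ∈ 𝔽_qⁿ with a perfect linear complexity profile, i.e. LC(s₁,…,s_j) = ⌊(j+1)/2⌋ for all 1 ≤ j ≤ n, equals (q−1)^⌈n/2⌉ · q^⌊n/2⌋. -/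
/-!
A polynomial `p = ∑ pₖ Xᵏ` of degree `d < c` annihilates `s` up to length `r + d` exactly when
its coefficient vector lies in the kernel of the `r × c` Hankel matrix `(s_{i+j+1})`. Hence a
singular `H_t` yields an annihilator of degree `d < t` valid up to length `t + d`, which a perfect
profile forbids since `⌊(t + d + 1)/2⌋ > d`; conversely, if `H_t` is nonsingular there is no
annihilator of degree `< t` up to length `2t - 1`, while the kernel of the `t × (t + 1)` Hankel
matrix supplies one of degree `t` up to length `2t`. So a perfect profile means exactly that
`det H_t ≠ 0` whenever `2t ≤ n + 1`.

Appending a term to such a sequence of odd length creates no new condition, so all `q` values are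
allowed. For even length `2m` the new minor `det H_{m+1}` is affine in `s_{2m+1}` with slope
`det H_m ≠ 0`, so exactly one value is forbidden.
-/

open Polynomial

/-- `f` is an annihilator (characteristic polynomial) of the first `n` terms of `s`
(indexed from 1). -/
def IsAnnihilator {D : Type*} [CommRing D] (s : ℕ → D) (n : ℕ) (f : Polynomial D) : Prop :=
  f = 0 ∨ ∀ j, f.natDegree + 1 ≤ j → j ≤ n →
    ∑ k ∈ Finset.range (f.natDegree + 1), f.coeff k * s (j - f.natDegree + k) = 0

/-- The linear complexity of the first `n` terms of `s`. -/
noncomputable def LC {D : Type*} [CommRing D] (s : ℕ → D) (n : ℕ) : ℕ :=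
  sInf {d : ℕ | ∃ f : Polynomial D, f ≠ 0 ∧ IsAnnihilator s n f ∧ f.natDegree = d}

/-- Extend a finite sequence `v : Fin n → F` (1-indexed as a sequence) to `ℕ → F`. -/
def extSeq {F : Type*} [Zero F] {n : ℕ} (v : Fin n → F) : ℕ → F :=
  fun j => if h : j - 1 < n then v ⟨j - 1, h⟩ else 0

open Matrix

theorem det_add_single_last_last {R : Type*} [CommRing R] {t : ℕ}
    (M : Matrix (Fin (t + 1)) (Fin (t + 1)) R) (x : R) :
    (M + single (Fin.last t) (Fin.last t) x).det =
      M.det + x * (M.submatrix Fin.castSucc Fin.castSucc).det := by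
  have hM : M + single (Fin.last t) (Fin.last t) x =
      M.updateRow (Fin.last t) (M (Fin.last t) + x • Pi.single (Fin.last t) 1) := by
    ext i j
    by_cases hi : i = Fin.last t
    · subst hi
      by_cases hj : j = Fin.last t <;> simp [hj, Ne.symm]
    · simp [hi, Ne.symm hi]
  rw [hM, det_updateRow_add, updateRow_eq_self, det_updateRow_smul, ← adjugate_apply,
    adjugate_fin_succ_eq_det_submatrix, Fin.succAbove_last, ← two_mul, pow_mul]
  simp

theorem card_add_mul_ne_zero {F : Type*} [Field F] [Fintype F] (a : F) {b : F} (hb : b ≠ 0) :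
    Nat.card {x : F // a + x * b ≠ 0} = Fintype.card F - 1 := by
  classical
  have h : ∀ x, a + x * b ≠ 0 ↔ x ≠ -a / b := fun x => by
    rw [Ne, Ne, not_iff_not, eq_div_iff hb]
    constructor <;> intro h <;> linear_combination h
  rw [Nat.card_congr (Equiv.subtypeEquivRight h), Nat.card_eq_fintype_card,
    Fintype.card_subtype_compl, Fintype.card_subtype_eq]

theorem card_subtype_snoc {α : Type*} [Fintype α] {n : ℕ}
    (P : (Fin (n + 1) → α) → Prop) :
    Nat.card {v // P v} = ∑ u : Fin n → α, Nat.card {x // P (Fin.snoc u x)} := by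
  rw [← Nat.card_sigma]
  refine Nat.card_congr <| (Equiv.subtypeEquiv
    ((Fin.snocEquiv fun _ => α).symm.trans (Equiv.prodComm _ _)) fun v => ?_).trans
    (Equiv.subtypeProdEquivSigmaSubtype fun u x => P (Fin.snoc u x))
  simp

theorem eq_pow_mul_pow_of_succ {M : Type*} [CommMonoid M] {a : ℕ → M} {b c : M} (h0 : a 0 = 1)
    (hsucc : ∀ n, a (n + 1) = a n * if Even n then b else c) (n : ℕ) :
    a n = b ^ ((n + 1) / 2) * c ^ (n / 2) := by
  induction n with
  | zero => simp [h0]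
  | succ n ih =>
    rw [hsucc, ih]
    split_ifs with hn
    · obtain ⟨m, rfl⟩ := hn
      rw [show (m + m + 1 + 1) / 2 = m + 1 by omega, show (m + m + 1) / 2 = m by omega,
        show (m + m) / 2 = m by omega, pow_succ b, mul_right_comm]
    · obtain ⟨m, rfl⟩ := Nat.not_even_iff_odd.1 hn
      rw [show (2 * m + 1 + 1 + 1) / 2 = m + 1 by omega, show (2 * m + 1 + 1) / 2 = m + 1 by omega,
        show (2 * m + 1) / 2 = m by omega, pow_succ c, mul_assoc]

-- Indexed from 1 like `extSeq`: the top-left entry is `s 1`.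
def hankel {R : Type*} (s : ℕ → R) (r c : ℕ) : Matrix (Fin r) (Fin c) R :=
  Matrix.of fun i j => s (i + j + 1)

theorem hankel_congr {R : Type*} {s s' : ℕ → R} {r c : ℕ}
    (h : ∀ k, 1 ≤ k → k < r + c → s k = s' k) : hankel s r c = hankel s' r c := by
  ext i j
  exact h _ (by omega) (by omega)

theorem det_hankel_add_single {R : Type*} [CommRing R] (s : ℕ → R) (t : ℕ) (x : R) :
    (hankel (s + Pi.single (2 * t + 1) x) (t + 1) (t + 1)).det =
      (hankel s (t + 1) (t + 1)).det + x * (hankel s t t).det := by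
  have h : hankel (s + Pi.single (2 * t + 1) x) (t + 1) (t + 1) =
      hankel s (t + 1) (t + 1) + single (Fin.last t) (Fin.last t) x := by
    ext i j
    have hij : i.1 + j.1 = 2 * t ↔ Fin.last t = i ∧ Fin.last t = j := by
      simp only [Fin.ext_iff, Fin.val_last]; omega
    simp [hankel, single_apply, Pi.single_apply, hij]
  rw [h, det_add_single_last_last]
  rfl

section Annihilator

variable {R : Type*} [CommRing R] {s : ℕ → R} {n : ℕ} {p : R[X]}

theorem isAnnihilator_iff : IsAnnihilator s n p ↔ ∀ j, p.natDegree + 1 ≤ j → j ≤ n →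
    ∑ k ∈ Finset.range (p.natDegree + 1), p.coeff k * s (j - p.natDegree + k) = 0 :=
  ⟨fun h => h.elim (fun hp _ _ _ => by simp [hp]) id, Or.inr⟩

theorem IsAnnihilator.mono {m : ℕ} (h : IsAnnihilator s n p) (hmn : m ≤ n) :
    IsAnnihilator s m p :=
  isAnnihilator_iff.2 fun j hj hjm => isAnnihilator_iff.1 h j hj (hjm.trans hmn)

theorem hankel_mulVec_coeff_apply {r c : ℕ} (hp : p.natDegree < c) (i : Fin r) :
    (hankel s r c *ᵥ fun k => p.coeff k) i =
      ∑ k ∈ Finset.range (p.natDegree + 1), p.coeff k * s (i + 1 + k) := by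
  simp only [Matrix.mulVec, dotProduct, hankel, Matrix.of_apply]
  rw [Fin.sum_univ_eq_sum_range (fun k => s (i + k + 1) * p.coeff k),
    ← Finset.sum_subset (Finset.range_subset_range.2 hp) fun k _ hk => by
      rw [coeff_eq_zero_of_natDegree_lt (by simpa using hk), mul_zero]]
  exact Finset.sum_congr rfl fun k _ => by rw [mul_comm, add_right_comm]

theorem hankel_mulVec_coeff_eq_zero_iff {r c : ℕ} (hp : p.natDegree < c) :
    (hankel s r c *ᵥ fun k => p.coeff k) = 0 ↔ IsAnnihilator s (r + p.natDegree) p := by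
  rw [isAnnihilator_iff, funext_iff]
  simp only [hankel_mulVec_coeff_apply hp, Pi.zero_apply]
  constructor
  · intro h j hj hjr
    have := h ⟨j - p.natDegree - 1, by omega⟩
    rwa [show j - p.natDegree - 1 + 1 = j - p.natDegree by omega] at this
  · intro h i
    have := h (i + 1 + p.natDegree) (by omega) (by omega)
    rwa [show i + 1 + p.natDegree - p.natDegree = i + 1 by omega] at this

end Annihilator

section LinearComplexity

variable {R : Type*} [CommRing R] {s : ℕ → R} {n : ℕ}

theorem LC_le_natDegree {p : R[X]} (hp : p ≠ 0) (h : IsAnnihilator s n p) :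
    LC s n ≤ p.natDegree :=
  Nat.sInf_le ⟨p, hp, h, rfl⟩

theorem le_LC [Nontrivial R] {d : ℕ}
    (h : ∀ p : R[X], p ≠ 0 → IsAnnihilator s n p → d ≤ p.natDegree) : d ≤ LC s n := by
  have hX : IsAnnihilator s n (X ^ n : R[X]) :=
    isAnnihilator_iff.2 fun j hj hjn => by rw [natDegree_X_pow] at hj; omega
  obtain ⟨p, hp, hps, hpd⟩ :=
    Nat.sInf_mem (s := {d | ∃ p : R[X], p ≠ 0 ∧ IsAnnihilator s n p ∧ p.natDegree = d})
      ⟨n, X ^ n, (monic_X_pow n).ne_zero, hX, natDegree_X_pow n⟩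
  rw [LC, ← hpd]
  exact h p hp hps

end LinearComplexity

section Hankel

variable {F : Type*} [Field F] {s : ℕ → F} {n t : ℕ}

theorem det_hankel_ne_zero_iff : (hankel s t t).det ≠ 0 ↔
    ∀ p : F[X], p ≠ 0 → p.natDegree < t → ¬IsAnnihilator s (t + p.natDegree) p := by
  rw [Ne, ← exists_mulVec_eq_zero_iff]
  constructor
  · intro hdet p hp hpt hann
    have hpmem : p ∈ degreeLT F t := mem_degreeLT.2 ((natDegree_lt_iff_degree_lt hp).1 hpt)
    refine hdet ⟨degreeLTEquiv F t ⟨p, hpmem⟩, ?_, (hankel_mulVec_coeff_eq_zero_iff hpt).2 hann⟩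
    rwa [Ne, degreeLTEquiv_eq_zero_iff_eq_zero]
  · rintro h ⟨v, hv, hHv⟩
    obtain ⟨⟨p, hpmem⟩, rfl⟩ := (degreeLTEquiv F t).surjective v
    have hp : p ≠ 0 := by rwa [Ne, ← degreeLTEquiv_eq_zero_iff_eq_zero hpmem]
    have hpt : p.natDegree < t := (natDegree_lt_iff_degree_lt hp).2 (mem_degreeLT.1 hpmem)
    exact h p hp hpt ((hankel_mulVec_coeff_eq_zero_iff hpt).1 hHv)

theorem exists_annihilator_of_det_hankel_ne_zero (hdet : (hankel s t t).det ≠ 0) :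
    ∃ p : F[X], p ≠ 0 ∧ p.natDegree = t ∧ IsAnnihilator s (2 * t) p := by
  let L := (hankel s t (t + 1)).mulVecLin ∘ₗ (degreeLTEquiv F (t + 1)).toLinearMap
  have hker : LinearMap.ker L ≠ ⊥ := LinearMap.ker_ne_bot_of_finrank_lt <| by
    simp [(degreeLTEquiv F (t + 1)).finrank_eq]
  obtain ⟨⟨p, hpmem⟩, hpL, hp⟩ := Submodule.exists_mem_ne_zero_of_ne_bot hker
  replace hp : p ≠ 0 := fun h => hp (Subtype.ext h)
  have hpt : p.natDegree < t + 1 := (natDegree_lt_iff_degree_lt hp).2 (mem_degreeLT.1 hpmem)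
  have hann := (hankel_mulVec_coeff_eq_zero_iff hpt).1 hpL
  have hdeg : p.natDegree = t := by
    by_contra hne
    exact det_hankel_ne_zero_iff.1 hdet p hp (by omega) hann
  exact ⟨p, hp, hdeg, by rwa [hdeg, ← two_mul] at hann⟩

theorem LC_eq_of_det_hankel_ne_zero (hdet : (hankel s t t).det ≠ 0) (hlow : 2 * t ≤ n + 1)
    (hhigh : n ≤ 2 * t) : LC s n = t := by
  refine le_antisymm ?_ (le_LC fun p hp hann => ?_)
  · obtain ⟨p, hp, hdeg, hann⟩ := exists_annihilator_of_det_hankel_ne_zero hdet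
    exact hdeg ▸ LC_le_natDegree hp (hann.mono hhigh)
  · by_contra! hpt
    exact det_hankel_ne_zero_iff.1 hdet p hp hpt (hann.mono (by omega))

def HankelNondegenerate (s : ℕ → F) (n : ℕ) : Prop :=
  ∀ t, 2 * t ≤ n + 1 → (hankel s t t).det ≠ 0

theorem plcp_iff_hankelNondegenerate :
    (∀ j, 1 ≤ j → j ≤ n → LC s j = (j + 1) / 2) ↔ HankelNondegenerate s n := by
  refine ⟨fun h t ht => det_hankel_ne_zero_iff.2 fun p hp hpt hann => ?_, fun h j _ hj =>
    LC_eq_of_det_hankel_ne_zero (h _ (by omega)) (by omega) (by omega)⟩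
  have := h (t + p.natDegree) (by omega) (by omega)
  have := LC_le_natDegree hp hann
  omega

end Hankel

section Nondegenerate

variable {F : Type*} [Field F] {s s' : ℕ → F} {n : ℕ}

theorem hankelNondegenerate_congr (h : ∀ k, 1 ≤ k → k ≤ n → s k = s' k) :
    HankelNondegenerate s n ↔ HankelNondegenerate s' n :=
  forall₂_congr fun t ht => by rw [hankel_congr fun k hk hkt => h k hk (by omega)]

theorem hankelNondegenerate_succ_iff : HankelNondegenerate s (n + 1) ↔
    HankelNondegenerate s n ∧ ∀ t, 2 * t = n + 2 → (hankel s t t).det ≠ 0 := by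
  refine ⟨fun h => ⟨fun t ht => h t (by omega), fun t ht => h t (by omega)⟩, ?_⟩
  rintro ⟨h, hlast⟩ t ht
  rcases (by omega : 2 * t ≤ n + 1 ∨ 2 * t = n + 2) with ht | ht
  exacts [h t ht, hlast t ht]

open Classical in
theorem card_hankelNondegenerate_add_single [Fintype F] (s : ℕ → F) (n : ℕ) :
    Nat.card {x : F // HankelNondegenerate (s + Pi.single (n + 1) x) (n + 1)} =
      if HankelNondegenerate s n then
        (if Even n then Fintype.card F - 1 else Fintype.card F) else 0 := by
  have hrestrict : ∀ x, HankelNondegenerate (s + Pi.single (n + 1) x) n ↔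
      HankelNondegenerate s n := fun x =>
    hankelNondegenerate_congr fun k _ hk => by simp [show k ≠ n + 1 by omega]
  simp_rw [hankelNondegenerate_succ_iff, hrestrict]
  split_ifs with hs heven
  · obtain ⟨m, rfl⟩ := heven
    have hlast : ∀ x, (∀ t, 2 * t = m + m + 2 →
        (hankel (s + Pi.single (m + m + 1) x) t t).det ≠ 0) ↔
        (hankel s (m + 1) (m + 1)).det + x * (hankel s m m).det ≠ 0 := fun x => by
      rw [← two_mul, ← det_hankel_add_single]
      exact ⟨fun h => h (m + 1) (by omega), fun h t ht => (by omega : t = m + 1) ▸ h⟩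
    simp_rw [hs, true_and, hlast]
    exact card_add_mul_ne_zero _ (hs m (by omega))
  · have hlast : ∀ x t, 2 * t = n + 2 →
        (hankel (s + Pi.single (n + 1) x) t t).det ≠ 0 := fun x t ht => by
      obtain ⟨m, rfl⟩ := Nat.not_even_iff_odd.1 heven
      omega
    simp_rw [hs, true_and]
    rw [Nat.card_congr (Equiv.subtypeUnivEquiv hlast), Nat.card_eq_fintype_card]
  · simp [hs]

end Nondegenerate

theorem extSeq_snoc {F : Type*} [AddZeroClass F] {n : ℕ} (u : Fin n → F) (x : F) {k : ℕ}
    (hk : 1 ≤ k) : extSeq (Fin.snoc u x) k = (extSeq u + Pi.single (n + 1) x : ℕ → F) k := by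
  rcases lt_trichotomy k (n + 1) with hlt | rfl | hgt
  · have h : k - 1 < n := by omega
    simp [extSeq, h, Nat.lt_succ_of_lt h, hlt.ne, Fin.snoc]
  · simp [extSeq, Fin.snoc]
  · simp [extSeq, show ¬k - 1 < n + 1 by omega, show ¬k - 1 < n by omega, hgt.ne']

theorem card_hankelNondegenerate_extSeq {F : Type*} [Field F] [Fintype F] (n : ℕ) :
    Nat.card {v : Fin n → F // HankelNondegenerate (extSeq v) n} =
      (Fintype.card F - 1) ^ ((n + 1) / 2) * Fintype.card F ^ (n / 2) := by
  classical
  refine eq_pow_mul_pow_of_succ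
    (a := fun n => Nat.card {v : Fin n → F // HankelNondegenerate (extSeq v) n}) ?_ (fun n => ?_) n
  · have h0 (v : Fin 0 → F) : HankelNondegenerate (extSeq v) 0 := fun t ht => by
      rw [show t = 0 by omega, det_isEmpty]
      exact one_ne_zero
    rw [Nat.card_congr (Equiv.subtypeUnivEquiv h0), Nat.card_unique]
  · rw [card_subtype_snoc]
    simp_rw [hankelNondegenerate_congr fun k hk _ => extSeq_snoc _ _ hk,
      card_hankelNondegenerate_add_single]
    rw [Finset.sum_ite, Finset.sum_const_zero, add_zero, Finset.sum_const, smul_eq_mul,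
      ← Fintype.card_subtype, Nat.card_eq_fintype_card]

theorem count_plcp_general (F : Type*) [Field F] [Fintype F] (n : ℕ) :
    Nat.card {v : Fin n → F // ∀ j, 1 ≤ j → j ≤ n → LC (extSeq v) j = (j + 1) / 2}
      = (Fintype.card F - 1) ^ ((n + 1) / 2) * Fintype.card F ^ (n / 2) := by
  rw [Nat.card_congr (Equiv.subtypeEquivRight fun v => plcp_iff_hankelNondegenerate)]
  exact card_hankelNondegenerate_extSeq n

theorem count_plcp (F : Type*) [Field F] [Fintype F] (n : ℕ) (hn : 1 ≤ n) :
    Nat.card {v : Fin n → F // ∀ j, 1 ≤ j → j ≤ n → LC (extSeq v) j = (j + 1) / 2}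
      = (Fintype.card F - 1) ^ ((n + 1) / 2) * Fintype.card F ^ (n / 2) :=
  count_plcp_general F n
end

section
/- Let n ≥ 1 be odd and s ∈ 𝔽₂ⁿ. If s has a perfect linear complexity profile (LC of the length-j prefix equals ⌊(j+1)/2⌋ for 1 ≤ j ≤ n), then s is stable: s₁ = 1 and for every even j with 2 ≤ j ≤ n−1, s_{j+1} = s_j + s_{j/2}. -/
open Polynomial

open Finset

/-!
Put `S = ∑ sᵢ₊₁ Xⁱ` and `T = X²S² + XS + S` over `𝔽₂`. As `S² = S(X²)`, the coefficient of
`X²ᵗ` in `T` is `sₜ + s₂ₜ + s₂ₜ₊₁` (and `s₁` for `t = 0`), so stability says that the even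
coefficients of `T` are `1, 0, 0, …`. Linear complexity is governed by reflected annihilators
`a` (connection polynomials), i.e. polynomials for which `u = aS` has a run of zero coefficients.

Let `a` be a connection polynomial of length `t` for the first `2t` terms, `β = u_{t-1}` and
`δ = u_{2t}`. Compute the coefficient of `X²ᵗ` in `a²T` twice: as `a² = a(X²)`, induction on `t`
makes it `T_{2t} + aₜ`; as `a²T = X²u² + X·a·u + a·u`, the gap in `u` makes it
`β + aₜβ + δ`. A perfect profile forces `δ = 1` (the complexity jumps at `2t + 1`) and
`(aₜ, β) ≠ (0, 0)` (otherwise `a` would have length `t - 1`), and then `T_{2t} = 0`.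
-/

section ConnectionPoly

variable {D : Type*} [CommRing D] (s : ℕ → D)

noncomputable def prefixPoly (n : ℕ) : D[X] :=
  ∑ i ∈ range n, C (s (i + 1)) * X ^ i

lemma coeff_prefixPoly (n q : ℕ) :
    (prefixPoly s n).coeff q = if q < n then s (q + 1) else 0 := by
  simp [prefixPoly, coeff_C_mul, coeff_X_pow]

lemma coeff_reflect_mul_prefixPoly {n d q : ℕ} {f : D[X]} (hf : f.natDegree ≤ d) (hdq : d ≤ q)
    (hqn : q < n) :
    (reflect d f * prefixPoly s n).coeff q =
      ∑ k ∈ range (d + 1), f.coeff k * s (q + 1 - d + k) := by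
  rw [coeff_mul, Nat.sum_antidiagonal_eq_sum_range_succ_mk,
    ← sum_subset (range_subset_range.2 (by omega : d + 1 ≤ q + 1)), ← sum_range_reflect]
  · refine sum_congr rfl fun k hk => ?_
    have hk : k < d + 1 := mem_range.1 hk
    rw [coeff_reflect, revAt_le (by omega), coeff_prefixPoly, if_pos (by omega)]
    congr 2 <;> omega
  · intro i _ hi
    have hi : d < i := by simpa using hi
    rw [coeff_reflect, revAt_eq_self_of_lt hi, coeff_eq_zero_of_natDegree_lt (by omega), zero_mul]

lemma isAnnihilator_iff_coeff_reflect_mul_prefixPoly {m n : ℕ} (hmn : m ≤ n) {f : D[X]}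
    (hf : f ≠ 0) :
    IsAnnihilator s m f ↔ ∀ q, f.natDegree ≤ q → q < m →
      (reflect f.natDegree f * prefixPoly s n).coeff q = 0 := by
  simp only [IsAnnihilator, hf, false_or]
  constructor
  · intro h q hdq hqm
    rw [coeff_reflect_mul_prefixPoly s le_rfl hdq (by omega)]
    exact h (q + 1) (by omega) (by omega)
  · intro h j hdj hjm
    have := h (j - 1) (by omega) (by omega)
    rwa [coeff_reflect_mul_prefixPoly s le_rfl (by omega) (by omega),
      show j - 1 + 1 = j by omega] at this

/-- Connection polynomial, in the Berlekamp–Massey convention, of a shift register of length `L`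
generating `s₁, …, sₘ`: the reflection of an annihilator of degree `L`. Any `n ≥ m` gives the
same notion. -/
def IsConnectionPoly (n L m : ℕ) (a : D[X]) : Prop :=
  a.natDegree ≤ L ∧ a.coeff 0 ≠ 0 ∧ ∀ q, L ≤ q → q < m → (a * prefixPoly s n).coeff q = 0

variable {s}

lemma exists_isConnectionPoly_of_LC_eq [Nontrivial D] {m n L : ℕ} (hmn : m ≤ n)
    (h : LC s m = L) : ∃ a, IsConnectionPoly s n L m a := by
  have hne : {d | ∃ f : D[X], f ≠ 0 ∧ IsAnnihilator s m f ∧ f.natDegree = d}.Nonempty := by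
    refine ⟨m, X ^ m, (monic_X_pow m).ne_zero, Or.inr fun j hj hjm => ?_, natDegree_X_pow m⟩
    rw [natDegree_X_pow] at hj
    omega
  have hmem : LC s m ∈ _ := Nat.sInf_mem hne
  obtain ⟨f, hf, hann, rfl⟩ := h ▸ hmem
  refine ⟨reflect f.natDegree f, ?_, ?_, ?_⟩
  · simpa using natDegree_reflect_le (N := f.natDegree) (p := f)
  · simpa [coeff_reflect] using hf
  · exact (isAnnihilator_iff_coeff_reflect_mul_prefixPoly s hmn hf).1 hann

lemma IsConnectionPoly.LC_le {m n L : ℕ} {a : D[X]} (h : IsConnectionPoly s n L m a)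
    (hmn : m ≤ n) : LC s m ≤ L := by
  obtain ⟨hdeg, ha0, hgap⟩ := h
  have hL : (reflect L a).coeff L = a.coeff 0 := by simp [coeff_reflect]
  have hdeg' : (reflect L a).natDegree = L :=
    le_antisymm (by simpa [hdeg] using natDegree_reflect_le (N := L) (p := a))
      (le_natDegree_of_ne_zero (hL ▸ ha0))
  have hne : reflect L a ≠ 0 := fun h0 => ha0 (by simpa [h0] using hL.symm)
  refine Nat.sInf_le ⟨reflect L a, hne, ?_, hdeg'⟩
  rw [isAnnihilator_iff_coeff_reflect_mul_prefixPoly s hmn hne, hdeg', reflect_reflect]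
  exact hgap

lemma IsConnectionPoly.coeff_mul_prefixPoly_ne_zero {m n L : ℕ} {a : D[X]}
    (h : IsConnectionPoly s n L m a) (hmn : m < n) (hLC : L < LC s (m + 1)) :
    (a * prefixPoly s n).coeff m ≠ 0 := by
  intro h0
  refine (IsConnectionPoly.LC_le ⟨h.1, h.2.1, fun q hLq hqm => ?_⟩ hmn).not_gt hLC
  rcases (Nat.lt_succ_iff.1 hqm).lt_or_eq with hq | rfl
  exacts [h.2.2 q hLq hq, h0]

lemma IsConnectionPoly.coeff_ne_zero_or_coeff_mul_prefixPoly_ne_zero {m n L : ℕ} {a : D[X]}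
    (h : IsConnectionPoly s n L m a) (hmn : m ≤ n) (hLC : L ≤ LC s m) :
    a.coeff L ≠ 0 ∨ (a * prefixPoly s n).coeff (L - 1) ≠ 0 := by
  obtain ⟨hdeg, ha0, hgap⟩ := h
  by_contra! hzero
  obtain ⟨haL, huL⟩ := hzero
  rcases Nat.eq_zero_or_pos L with rfl | hL
  · exact ha0 haL
  have hdeg' : a.natDegree ≤ L - 1 := by
    refine natDegree_le_iff_coeff_eq_zero.2 fun i hi => ?_
    rcases (show L ≤ i by omega).lt_or_eq with hi | rfl
    exacts [coeff_eq_zero_of_natDegree_lt (by omega), haL]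
  refine (IsConnectionPoly.LC_le (s := s) ⟨hdeg', ha0, fun q hLq hqm => ?_⟩ hmn).not_gt
    (by omega)
  rcases hLq.lt_or_eq with hq | rfl
  exacts [hgap q (by omega) hqm, huL]

lemma LC_one_eq_zero [Nontrivial D] (h : s 1 = 0) : LC s 1 = 0 := by
  refine Nat.eq_zero_of_le_zero
    (Nat.sInf_le ⟨1, one_ne_zero, Or.inr fun j hj hj1 => ?_, natDegree_one⟩)
  obtain rfl : j = 1 := by simp at hj; omega
  simpa using h

end ConnectionPoly

section Gap

variable {D : Type*} [CommRing D] {a u : D[X]} {t : ℕ}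

lemma coeff_mul_two_mul_of_gap (ha : a.natDegree ≤ t)
    (hu : ∀ q, t ≤ q → q < 2 * t → u.coeff q = 0) :
    (a * u).coeff (2 * t) = a.coeff 0 * u.coeff (2 * t) := by
  rw [coeff_mul, sum_eq_single (0, 2 * t) (fun ij hij hne => ?_) (by simp)]
  rw [HasAntidiagonal.mem_antidiagonal] at hij
  obtain ⟨i, j⟩ := ij
  rcases lt_or_ge t i with hi | hi
  · rw [coeff_eq_zero_of_natDegree_lt (by omega : a.natDegree < i), zero_mul]
  · rw [hu j (by omega) (by grind), mul_zero]

lemma coeff_mul_two_mul_sub_one_of_gap (ha : a.natDegree ≤ t)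
    (hu : ∀ q, t ≤ q → q < 2 * t → u.coeff q = 0) :
    (a * u).coeff (2 * t - 1) = a.coeff t * u.coeff (t - 1) := by
  rw [coeff_mul, sum_eq_single (t, t - 1) (fun ij hij hne => ?_)
    fun h => (h (by rw [HasAntidiagonal.mem_antidiagonal]; omega)).elim]
  rw [HasAntidiagonal.mem_antidiagonal] at hij
  obtain ⟨i, j⟩ := ij
  rcases lt_or_ge t i with hi | hi
  · rw [coeff_eq_zero_of_natDegree_lt (by omega : a.natDegree < i), zero_mul]
  · rw [hu j (by grind) (by grind), mul_zero]

end Gap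

section ZModTwo

lemma zmod_two_eq_one_of_ne_zero : ∀ {x : ZMod 2}, x ≠ 0 → x = 1 := by decide

lemma coeff_sq_zmod_two (p : (ZMod 2)[X]) (m : ℕ) :
    (p ^ 2).coeff m = if 2 ∣ m then p.coeff (m / 2) else 0 := by
  rw [← ZMod.expand_card, coeff_expand two_pos]

lemma coeff_sq_mul_two_mul (a T : (ZMod 2)[X]) {t : ℕ} (ht : 0 < t)
    (hT : ∀ k, 0 < k → k < t → T.coeff (2 * k) = 0) :
    (a ^ 2 * T).coeff (2 * t) = a.coeff 0 * T.coeff (2 * t) + a.coeff t * T.coeff 0 := by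
  have hsub : ({(0, 2 * t), (2 * t, 0)} : Finset (ℕ × ℕ)) ⊆ antidiagonal (2 * t) := by
    simp [insert_subset_iff]
  rw [coeff_mul, ← sum_subset hsub, sum_pair (by simp; omega)]
  · simp [coeff_sq_zmod_two]
  · rintro ⟨i, j⟩ hij hne
    rw [HasAntidiagonal.mem_antidiagonal] at hij
    rw [coeff_sq_zmod_two]
    split_ifs with hi
    · obtain ⟨k, rfl⟩ := hi
      rw [show j = 2 * (t - k) by omega, hT (t - k) (by grind) (by grind), mul_zero]
    · exact zero_mul _

noncomputable def stabilityPoly (s : ℕ → ZMod 2) (n : ℕ) : (ZMod 2)[X] :=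
  prefixPoly s n ^ 2 * X ^ 2 + prefixPoly s n * X + prefixPoly s n

variable {s : ℕ → ZMod 2} {n : ℕ}

lemma coeff_stabilityPoly_zero (hn : 0 < n) : (stabilityPoly s n).coeff 0 = s 1 := by
  simp [stabilityPoly, coeff_prefixPoly, hn]

lemma coeff_stabilityPoly_two_mul {t : ℕ} (ht : 0 < t) (htn : 2 * t < n) :
    (stabilityPoly s n).coeff (2 * t) = s t + s (2 * t) + s (2 * t + 1) := by
  obtain ⟨k, rfl⟩ : ∃ k, t = k + 1 := ⟨t - 1, by omega⟩
  simp [stabilityPoly, coeff_prefixPoly, coeff_sq_zmod_two, mul_add, show k < n by omega,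
    show 2 * k + 1 < n by omega, show 2 * k + 2 < n by omega]

lemma coeff_stabilityPoly_two_mul_eq_zero {t : ℕ} (ht : 0 < t) (htn : 2 * t < n)
    (hLC : LC s (2 * t) = t) (hLC' : LC s (2 * t + 1) = t + 1)
    (hT0 : (stabilityPoly s n).coeff 0 = 1)
    (hT : ∀ k, 0 < k → k < t → (stabilityPoly s n).coeff (2 * k) = 0) :
    (stabilityPoly s n).coeff (2 * t) = 0 := by
  obtain ⟨a, ha⟩ := exists_isConnectionPoly_of_LC_eq htn.le hLC
  set u := a * prefixPoly s n
  have ha0 : a.coeff 0 = 1 := zmod_two_eq_one_of_ne_zero ha.2.1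
  have hu : u.coeff (2 * t) = 1 :=
    zmod_two_eq_one_of_ne_zero (ha.coeff_mul_prefixPoly_ne_zero htn (by omega))
  have hαβ := ha.coeff_ne_zero_or_coeff_mul_prefixPoly_ne_zero htn.le hLC.ge
  have hgap : ∀ q, t ≤ q → q < 2 * t → u.coeff q = 0 := ha.2.2
  have hsquares : (a ^ 2 * stabilityPoly s n).coeff (2 * t) =
      (stabilityPoly s n).coeff (2 * t) + a.coeff t := by
    rw [coeff_sq_mul_two_mul a _ ht hT, ha0, hT0, one_mul, mul_one]
  have hproducts : (a ^ 2 * stabilityPoly s n).coeff (2 * t) =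
      u.coeff (t - 1) + a.coeff t * u.coeff (t - 1) + 1 := by
    rw [show a ^ 2 * stabilityPoly s n = u ^ 2 * X ^ 2 + a * u * X ^ 1 + a * u by
      simp only [stabilityPoly, u]; ring]
    simp only [coeff_add, coeff_mul_X_pow', if_pos (by omega : 2 ≤ 2 * t),
      if_pos (by omega : 1 ≤ 2 * t), coeff_sq_zmod_two, if_pos (by omega : 2 ∣ 2 * t - 2),
      show (2 * t - 2) / 2 = t - 1 by omega, coeff_mul_two_mul_sub_one_of_gap ha.1 hgap,
      coeff_mul_two_mul_of_gap ha.1 hgap, ha0, hu, one_mul]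
  exact (by decide : ∀ x α β : ZMod 2, α ≠ 0 ∨ β ≠ 0 → x + α = β + α * β + 1 → x = 0)
    _ _ _ hαβ (hsquares.symm.trans hproducts)

end ZModTwo

theorem plcp_stable_general (n : ℕ) (hn : 1 ≤ n) (s : ℕ → ZMod 2)
    (hplcp : ∀ j, 1 ≤ j → j ≤ n → LC s j = (j + 1) / 2) :
    s 1 = 1 ∧ ∀ j, 2 ≤ j → j ≤ n - 1 → Even j → s (j + 1) = s j + s (j / 2) := by
  have hs1 : s 1 = 1 := by
    refine zmod_two_eq_one_of_ne_zero fun h => ?_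
    simpa [LC_one_eq_zero h] using hplcp 1 le_rfl hn
  have hT0 : (stabilityPoly s n).coeff 0 = 1 := (coeff_stabilityPoly_zero hn).trans hs1
  have hTeven : ∀ t, 0 < t → 2 * t < n → (stabilityPoly s n).coeff (2 * t) = 0 := by
    intro t
    induction t using Nat.strong_induction_on with
    | _ t ih =>
      intro ht htn
      refine coeff_stabilityPoly_two_mul_eq_zero ht htn ?_ ?_ hT0
        fun k hk hkt => ih k hkt hk (by omega)
      · rw [hplcp _ (by omega) (by omega)]; omega
      · rw [hplcp _ (by omega) (by omega)]; omega
  refine ⟨hs1, fun j hj hjn ⟨t, ht⟩ => ?_⟩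
  have hrel := coeff_stabilityPoly_two_mul (s := s) (n := n) (t := t) (by omega) (by omega)
  rw [hTeven t (by omega) (by omega)] at hrel
  rw [ht, ← two_mul, Nat.mul_div_cancel_left t two_pos]
  linear_combination (norm := ring_nf) hrel
  reduce_mod_char

theorem plcp_stable (n : ℕ) (hn : 1 ≤ n) (hodd : Odd n) (s : ℕ → ZMod 2)
    (hplcp : ∀ j, 1 ≤ j → j ≤ n → LC s j = (j + 1) / 2) :
    s 1 = 1 ∧ ∀ j, 2 ≤ j → j ≤ n - 1 → Even j → s (j + 1) = s j + s (j / 2) :=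
  plcp_stable_general n hn s hplcp
end

section
/- Let r : ℕ → 𝔽₂ be the sequence with r_j = 1 if j is a power of 2 and r_j = 0 otherwise. Then for every n ≥ 1, the linear complexity of the prefix (r₁,…,r_n) equals ⌊(n+1)/2⌋; i.e. r has a perfect linear complexity profile. (Rueppel's conjecture.) -/
/-!
Let `S = ∑ sⱼ Xʲ`. A nonzero annihilator `f` of degree `d` of `s₁, …, s_N` says that
`Q S ≡ g (mod X^{N+1})`, where `Q` is the reversal of `f` and `g` is a polynomial of degree `≤ d`.
If `S² + S + X = 0`, then `g² + Q g + X Q² ≡ 0 (mod X^{N+1})`; this polynomial has degree at most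
`2d + 1` and is nonzero (its top term comes from `g²` or from `X Q²`, of even resp. odd degree),
so `N ≤ 2d`. Conversely, `m + 1` unknown coefficients subject to `m` linear conditions give a
nonzero `f` of degree `d ≤ m` annihilating `s₁, …, s_{d+m}`; the bound forces `d = m`, so for
`m = ⌊(n+1)/2⌋` it annihilates `s₁, …, s_n`.
Over `𝔽₂` the generating series of the indicator of the powers of two satisfies
`S = S(X²) + X = S² + X`.
-/

open Polynomial

theorem PowerSeries.sq_eq_expand_two (φ : PowerSeries (ZMod 2)) :
    φ ^ 2 = expand 2 two_ne_zero φ := by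
  ext n
  rw [sq, coeff_mul_eq_coeff_trunc_mul_trunc _ _ (Nat.lt_succ_self n), ← Polynomial.coe_mul,
    Polynomial.coeff_coe, ← sq, ← ZMod.expand_card, Polynomial.coeff_expand two_pos, coeff_expand,
    coeff_trunc]
  split_ifs <;> first | rfl | omega

theorem PowerSeries.mk_sq_add_self_add_X_eq_zero {s : ℕ → ZMod 2} (h_even : ∀ i, s (2 * i) = s i)
    (h_odd : ∀ i, s (2 * i + 1) = if i = 0 then 1 else 0) : mk s ^ 2 + mk s + X = 0 := by
  have hs : mk s = expand 2 two_ne_zero (mk s) + X := by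
    ext n
    rw [map_add, coeff_expand, coeff_mk, coeff_mk, coeff_X]
    obtain ⟨i, rfl | rfl⟩ := Nat.even_or_odd' n
    · rw [if_pos (dvd_mul_right 2 i), if_neg (by omega), h_even, Nat.mul_div_cancel_left i two_pos,
        add_zero]
    · rw [if_neg (by omega), h_odd, zero_add]
      simp
  have : CharP (PowerSeries (ZMod 2)) 2 := charP_of_injective_algebraMap C_injective 2
  rw [sq_eq_expand_two]
  nth_rw 2 [hs]
  rw [← add_assoc, CharTwo.add_self_eq_zero, zero_add, CharTwo.add_self_eq_zero]

namespace Polynomial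

variable {R : Type*} [CommRing R]

theorem eq_zero_of_X_pow_dvd_coe {p : R[X]} {n : ℕ} (hp : p.natDegree < n)
    (h : (PowerSeries.X : PowerSeries R) ^ n ∣ (p : PowerSeries R)) : p = 0 := by
  ext t
  rw [coeff_zero]
  rcases lt_or_ge t n with ht | ht
  · rw [← coeff_coe]
    exact PowerSeries.X_pow_dvd_iff.1 h t ht
  · exact coeff_eq_zero_of_natDegree_lt (by omega)

theorem sq_add_mul_add_X_mul_sq_ne_zero [NoZeroDivisors R] {q : R[X]} (p : R[X]) (hq : q ≠ 0) :
    p ^ 2 + q * p + X * q ^ 2 ≠ 0 := by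
  have := nontrivial_iff.1 (nontrivial_of_ne q 0 hq)
  have hXq : (X * q ^ 2).natDegree = 2 * q.natDegree + 1 := by
    rw [natDegree_X_mul (pow_ne_zero 2 hq), natDegree_pow]
  intro h
  rcases le_or_gt p.natDegree q.natDegree with hpq | hqp
  · have hlow : (p ^ 2 + q * p).natDegree < (X * q ^ 2).natDegree :=
      (natDegree_add_le_of_degree_le (n := 2 * q.natDegree) (by rw [natDegree_pow]; omega)
        ((natDegree_mul_le_of_le le_rfl hpq).trans (by omega))).trans_lt (by omega)
    have := natDegree_add_eq_right_of_natDegree_lt hlow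
    rw [h, natDegree_zero] at this
    omega
  · have hlow : (q * p + X * q ^ 2).natDegree < (p ^ 2).natDegree := by
      rw [natDegree_pow]
      exact (natDegree_add_le_of_degree_le (n := 2 * p.natDegree - 1)
        ((natDegree_mul_le_of_le le_rfl le_rfl).trans (by omega)) (by omega)).trans_lt (by omega)
    have := natDegree_add_eq_left_of_natDegree_lt hlow
    rw [← add_assoc, h, natDegree_zero, natDegree_pow] at this
    omega

theorem coeff_reverse_mul_mk (f : R[X]) (s : ℕ → R) {j : ℕ} (hj : f.natDegree ≤ j) :
    PowerSeries.coeff j ((f.reverse : PowerSeries R) * PowerSeries.mk s) =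
      ∑ k ∈ Finset.range (f.natDegree + 1), f.coeff k * s (j - f.natDegree + k) := by
  set d := f.natDegree
  rw [PowerSeries.coeff_mul, Finset.Nat.sum_antidiagonal_eq_sum_range_succ
    (fun i l => PowerSeries.coeff i (f.reverse : PowerSeries R) *
      PowerSeries.coeff l (PowerSeries.mk s)),
    ← Finset.sum_range_reflect (fun k => f.coeff k * s (j - d + k)),
    ← Finset.sum_subset (Finset.range_subset_range.2 (by omega : d + 1 ≤ j.succ))]
  · refine Finset.sum_congr rfl fun i hi => ?_
    rw [Finset.mem_range] at hi
    rw [coeff_coe, coeff_reverse, revAt_le (by omega), PowerSeries.coeff_mk]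
    congr 2
    omega
  · intro i _ hid
    rw [Finset.mem_range, not_lt] at hid
    rw [coeff_coe, coeff_eq_zero_of_natDegree_lt ((reverse_natDegree_le f).trans_lt hid), zero_mul]

end Polynomial

namespace IsAnnihilator

variable {R : Type*} [CommRing R] {s : ℕ → R} {N : ℕ} {f : R[X]}

theorem mono_s14 {M : ℕ} (h : IsAnnihilator s N f) (hMN : M ≤ N) : IsAnnihilator s M f :=
  h.imp_right fun h j hj hjM => h j hj (hjM.trans hMN)

theorem X_pow_dvd_reverse_mul_sub_trunc (h : IsAnnihilator s N f) (hf : f ≠ 0) :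
    PowerSeries.X ^ (N + 1) ∣ (f.reverse : PowerSeries R) * PowerSeries.mk s -
      (PowerSeries.trunc (f.natDegree + 1) ((f.reverse : PowerSeries R) * PowerSeries.mk s) :
        PowerSeries R) := by
  refine PowerSeries.X_pow_dvd_iff.2 fun t ht => ?_
  rw [map_sub, coeff_coe, PowerSeries.coeff_trunc]
  split_ifs with htd
  · exact sub_self _
  · rw [sub_zero, coeff_reverse_mul_mk f s (by omega)]
    exact h.resolve_left hf t (by omega) (by omega)

theorem le_two_mul_natDegree [NoZeroDivisors R]
    (hs : PowerSeries.mk s ^ 2 + PowerSeries.mk s + PowerSeries.X = 0)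
    (h : IsAnnihilator s N f) (hf : f ≠ 0) : N ≤ 2 * f.natDegree := by
  set d := f.natDegree
  set S := PowerSeries.mk s
  set Q := f.reverse
  set g := PowerSeries.trunc (d + 1) ((Q : PowerSeries R) * S)
  set E := (Q : PowerSeries R) * S - g
  have hQ : Q ≠ 0 := mt reverse_eq_zero.1 hf
  have hQd : Q.natDegree ≤ d := reverse_natDegree_le f
  have hgd : g.natDegree ≤ d := Nat.lt_succ_iff.1 (PowerSeries.natDegree_trunc_lt _ _)
  have hE : PowerSeries.X ^ (N + 1) ∣ E := h.X_pow_dvd_reverse_mul_sub_trunc hf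
  -- substitute `Q S = g + E` into `Q² (S² + S + X)`
  have hsq : ((g ^ 2 + Q * g + X * Q ^ 2 : R[X]) : PowerSeries R) =
      (Q : PowerSeries R) ^ 2 * (S ^ 2 + S + PowerSeries.X) -
        E * (E + 2 * (g : PowerSeries R) + (Q : PowerSeries R)) := by
    simp only [E, coe_add, coe_mul, coe_pow, coe_X]
    ring
  by_contra! hN
  refine sq_add_mul_add_X_mul_sq_ne_zero g hQ (eq_zero_of_X_pow_dvd_coe (n := N + 1) ?_ ?_)
  · have : (g ^ 2 + Q * g + X * Q ^ 2).natDegree ≤ 2 * d + 1 :=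
      natDegree_add_le_of_degree_le
        (natDegree_add_le_of_degree_le ((natDegree_pow_le_of_le 2 hgd).trans (by omega))
          ((natDegree_mul_le_of_le hQd hgd).trans (by omega)))
        ((natDegree_mul_le_of_le natDegree_X_le (natDegree_pow_le_of_le 2 hQd)).trans (by omega))
    omega
  · rw [hsq, hs, mul_zero, zero_sub, dvd_neg]
    exact hE.mul_right _

end IsAnnihilator

theorem exists_isAnnihilator_natDegree_add {K : Type*} [Field K] (s : ℕ → K) (m : ℕ) :
    ∃ f : K[X], f ≠ 0 ∧ f.natDegree ≤ m ∧ IsAnnihilator s (f.natDegree + m) f := by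
  let L : K[X] →ₗ[K] Fin m → K :=
    LinearMap.pi fun i => ∑ k ∈ Finset.range (m + 1), s (i + 1 + k) • lcoeff K k
  have hdim : Module.finrank K (Fin m → K) < Module.finrank K (degreeLT K (m + 1)) := by
    rw [(degreeLTEquiv K (m + 1)).finrank_eq, Module.finrank_fin_fun, Module.finrank_fin_fun]
    omega
  obtain ⟨⟨f, hfdeg⟩, hker, hf⟩ := Submodule.exists_mem_ne_zero_of_ne_bot
    (LinearMap.ker_ne_bot_of_finrank_lt (f := L.domRestrict _) hdim)
  have hf0 : f ≠ 0 := fun h => hf (Subtype.ext h)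
  have hfm : f.natDegree ≤ m :=
    Nat.lt_succ_iff.1 ((natDegree_lt_iff_degree_lt hf0).2 (mem_degreeLT.1 hfdeg))
  have hLf (i : ℕ) (hi : i < m) : ∑ k ∈ Finset.range (m + 1), f.coeff k * s (i + 1 + k) = 0 := by
    simpa [L, mul_comm] using congrFun (LinearMap.mem_ker.1 hker) ⟨i, hi⟩
  refine ⟨f, hf0, hfm, Or.inr fun j hj hjm => ?_⟩
  rw [Finset.sum_subset (Finset.range_subset_range.2 (by omega : f.natDegree + 1 ≤ m + 1))
    fun k _ hk => by rw [coeff_eq_zero_of_natDegree_lt (by simpa using hk), zero_mul]]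
  convert hLf (j - f.natDegree - 1) (by omega) using 4
  omega

theorem LC_eq_of_mk_sq_add_self_add_X_eq_zero {K : Type*} [Field K] {s : ℕ → K}
    (hs : PowerSeries.mk s ^ 2 + PowerSeries.mk s + PowerSeries.X = 0) (n : ℕ) :
    LC s n = (n + 1) / 2 := by
  obtain ⟨f, hf0, hfm, hf⟩ := exists_isAnnihilator_natDegree_add s ((n + 1) / 2)
  have hdeg : f.natDegree = (n + 1) / 2 := by
    have := hf.le_two_mul_natDegree hs hf0
    omega
  have hfn : IsAnnihilator s n f := hf.mono_s14 (by omega)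
  refine le_antisymm (Nat.sInf_le ⟨f, hf0, hfn, hdeg⟩) (le_csInf ⟨_, f, hf0, hfn, hdeg⟩ ?_)
  rintro _ ⟨g, hg0, hg, rfl⟩
  have := hg.le_two_mul_natDegree hs hg0
  omega

theorem Nat.exists_two_mul_eq_two_pow_iff {i : ℕ} : (∃ k, 2 * i = 2 ^ k) ↔ ∃ k, i = 2 ^ k := by
  constructor
  · rintro ⟨_ | k, hk⟩
    · omega
    · exact ⟨k, by rw [pow_succ] at hk; omega⟩
  · rintro ⟨k, rfl⟩
    exact ⟨k + 1, by ring⟩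

theorem Nat.two_mul_add_one_ne_two_pow {i : ℕ} (hi : i ≠ 0) (k : ℕ) : 2 * i + 1 ≠ 2 ^ k := by
  rcases k with _ | k
  · omega
  · rw [pow_succ]
    omega

theorem rueppel_general (r : ℕ → ZMod 2)
    (hr : ∀ j, (∃ k : ℕ, j = 2 ^ k) → r j = 1)
    (hr' : ∀ j, (¬ ∃ k : ℕ, j = 2 ^ k) → r j = 0)
    (n : ℕ) : LC r n = (n + 1) / 2 := by
  have h_even (i : ℕ) : r (2 * i) = r i := by
    by_cases hi : ∃ k, i = 2 ^ k
    · rw [hr _ hi, hr _ (Nat.exists_two_mul_eq_two_pow_iff.2 hi)]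
    · rw [hr' _ hi, hr' _ (mt Nat.exists_two_mul_eq_two_pow_iff.1 hi)]
  have h_odd (i : ℕ) : r (2 * i + 1) = if i = 0 then 1 else 0 := by
    split_ifs with hi
    · exact hr _ ⟨0, by rw [hi]; rfl⟩
    · exact hr' _ fun ⟨k, hk⟩ => Nat.two_mul_add_one_ne_two_pow hi k hk
  exact LC_eq_of_mk_sq_add_self_add_X_eq_zero
    (PowerSeries.mk_sq_add_self_add_X_eq_zero h_even h_odd) n

theorem rueppel (r : ℕ → ZMod 2)
    (hr : ∀ j, (∃ k : ℕ, j = 2 ^ k) → r j = 1)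
    (hr' : ∀ j, (¬ ∃ k : ℕ, j = 2 ^ k) → r j = 0)
    (n : ℕ) (hn : 1 ≤ n) : LC r n = (n + 1) / 2 :=
  rueppel_general r hr hr' n
end

section
/- Let D be an integral domain and s ∈ Dⁿ a finite sequence, with LC_i the linear complexity of the prefix (s₁,…,s_i). Then ∑_{i=1}^{n} LC_i ≤ ∑_{i=1}^{n} ⌊(i+1)/2⌋ = ⌊(n+1)²/4⌋. -/
open Polynomial

/-!
Berlekamp–Massey: if a minimal annihilator `f` of `s₁, …, sₙ` fails at `sₙ₊₁`, and `g` is the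
annihilator that failed when the complexity last increased, then a suitable combination
`δ_g X^a f - δ_f X^b g` of shifts of the two cancels both discrepancies, so
`LCₙ₊₁ ≤ max (LCₙ, n + 1 - LCₙ)`. For any monotone profile `L` with `L 0 = 0` obeying this
recursion, `∑_{i ≤ n} Lᵢ + Lₙ² ≤ Lₙ (n + 1)` by induction (at a jump `Lₙ + Lₙ₊₁ ≤ n + 1`),
and `Lₙ (n + 1 - Lₙ) ≤ (n + 1)² / 4`.
-/

open Finset

namespace LinearComplexity

variable {D : Type*} [CommRing D] (s : ℕ → D)

/-- `shiftedEval s j f = ∑ₖ fₖ s_{j+k}`. -/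
def shiftedEval (j : ℕ) : D[X] →ₗ[D] D :=
  lsum fun k => LinearMap.mulRight D (s (j + k))

lemma shiftedEval_eq_sum (j : ℕ) (f : D[X]) {N : ℕ} (hN : f.natDegree < N) :
    shiftedEval s j f = ∑ k ∈ range N, f.coeff k * s (j + k) := by
  simp only [shiftedEval, lsum_apply, LinearMap.mulRight_apply]
  exact sum_over_range' f (fun _ => zero_mul (s _)) N hN

lemma shiftedEval_X_pow_mul (j a : ℕ) (f : D[X]) :
    shiftedEval s j (X ^ a * f) = shiftedEval s (j + a) f := by
  induction f using Polynomial.induction_on' with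
  | add p q hp hq => rw [mul_add, map_add, map_add, hp, hq]
  | monomial n c => simp [shiftedEval, X_pow_mul_monomial, add_assoc, add_comm a]

lemma shiftedEval_C_mul_X_pow_mul (j a : ℕ) (c : D) (f : D[X]) :
    shiftedEval s j (C c * (X ^ a * f)) = c * shiftedEval s (j + a) f := by
  rw [C_mul', map_smul, shiftedEval_X_pow_mul, smul_eq_mul]

/-- Unlike `IsAnnihilator`, windows are indexed by their first term `sⱼ`, not their last. -/
def Annihilates (n : ℕ) (f : D[X]) : Prop :=
  ∀ j, 1 ≤ j → j + f.natDegree ≤ n → shiftedEval s j f = 0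

def annihilatorDegrees (n : ℕ) : Set ℕ :=
  {d | ∃ f : D[X], f ≠ 0 ∧ Annihilates s n f ∧ f.natDegree = d}

variable {s}

lemma isAnnihilator_iff {n : ℕ} {f : D[X]} :
    IsAnnihilator s n f ↔ f = 0 ∨ Annihilates s n f := by
  refine or_congr Iff.rfl ⟨fun h j hj hjn => ?_, fun h j hj hjn => ?_⟩
  · simpa [shiftedEval_eq_sum s j f (f.natDegree.lt_add_one)] using
      h (j + f.natDegree) (by omega) hjn
  · simpa [shiftedEval_eq_sum s _ f (f.natDegree.lt_add_one)] using
      h (j - f.natDegree) (by omega) (by omega)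

lemma Annihilates.mono {m n : ℕ} {f : D[X]} (h : Annihilates s n f) (hmn : m ≤ n) :
    Annihilates s m f :=
  fun j hj hjm => h j hj (hjm.trans hmn)

lemma Annihilates.succ {n : ℕ} {f : D[X]} (h : Annihilates s n f)
    (hδ : shiftedEval s (n + 1 - f.natDegree) f = 0) : Annihilates s (n + 1) f := by
  intro j hj hjn
  obtain hjn | rfl : j + f.natDegree ≤ n ∨ j = n + 1 - f.natDegree := by omega
  exacts [h j hj hjn, hδ]

lemma Annihilates.shiftedEval_ne_zero {n : ℕ} {f : D[X]} (h : Annihilates s n f)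
    (h' : ¬ Annihilates s (n + 1) f) : shiftedEval s (n + 1 - f.natDegree) f ≠ 0 :=
  fun hδ => h' (h.succ hδ)

lemma annihilates_zero (n : ℕ) : Annihilates s n 0 :=
  fun _ _ _ => map_zero _

lemma annihilates_of_le_natDegree {n : ℕ} {f : D[X]} (h : n ≤ f.natDegree) :
    Annihilates s n f :=
  fun j hj hjn => by omega

lemma LC_eq_sInf (n : ℕ) : LC s n = sInf (annihilatorDegrees s n) := by
  unfold LC annihilatorDegrees
  congr! 3 with d
  exact exists_congr fun f => and_congr_right fun hf => by rw [isAnnihilator_iff, or_iff_right hf]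

lemma LC_le_natDegree {n : ℕ} {f : D[X]} (hf : f ≠ 0) (h : Annihilates s n f) :
    LC s n ≤ f.natDegree := by
  rw [LC_eq_sInf]
  exact Nat.sInf_le ⟨f, hf, h, rfl⟩

section Nontrivial

variable [Nontrivial D] (s)

lemma exists_annihilates_natDegree_eq_LC (n : ℕ) :
    ∃ f : D[X], f ≠ 0 ∧ Annihilates s n f ∧ f.natDegree = LC s n := by
  rw [LC_eq_sInf]
  exact Nat.sInf_mem (s := annihilatorDegrees s n) ⟨n, X ^ n, (monic_X_pow n).ne_zero,
    annihilates_of_le_natDegree (natDegree_X_pow n).ge, natDegree_X_pow n⟩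

lemma LC_le_self (n : ℕ) : LC s n ≤ n := by
  simpa using LC_le_natDegree (monic_X_pow n).ne_zero
    (annihilates_of_le_natDegree (s := s) (natDegree_X_pow n).ge)

lemma LC_zero : LC s 0 = 0 :=
  Nat.le_zero.1 (LC_le_self s 0)

lemma LC_mono : Monotone (LC s) := fun m n hmn => by
  obtain ⟨f, hf, hfn, hdeg⟩ := exists_annihilates_natDegree_eq_LC s n
  exact hdeg ▸ LC_le_natDegree hf (hfn.mono hmn)

end Nontrivial

variable (s) in
/-- Unless `LC s n = 0`, records the annihilator that failed when the complexity last increased. -/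
def MasseyWitness (n : ℕ) : Prop :=
  LC s n = 0 ∨ ∃ m < n, ∃ g : D[X], Annihilates s m g ∧ ¬ Annihilates s (m + 1) g ∧
    g.natDegree + LC s n ≤ m + 1

section IsDomain

variable [IsDomain D]

/-- The witness is `δ_g X^(L - deg f) f - δ_f X^(L - (n - m) - deg g) g`, where `δ_f, δ_g ≠ 0`
are the discrepancies of `f` at `sₙ₊₁` and of `g` at `sₘ₊₁`. -/
theorem exists_annihilates_succ {f g : D[X]} {m n L : ℕ}
    (hf : Annihilates s n f) (hf' : ¬ Annihilates s (n + 1) f)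
    (hg : Annihilates s m g) (hg' : ¬ Annihilates s (m + 1) g) (hmn : m < n)
    (hLf : f.natDegree ≤ L) (hLg : n - m + g.natDegree ≤ L) :
    ∃ h : D[X], h ≠ 0 ∧ Annihilates s (n + 1) h ∧ h.natDegree = L := by
  have hf0 : f ≠ 0 := by rintro rfl; exact hf' (annihilates_zero _)
  have hg0 : g ≠ 0 := by rintro rfl; exact hg' (annihilates_zero _)
  set δf := shiftedEval s (n + 1 - f.natDegree) f
  set δg := shiftedEval s (m + 1 - g.natDegree) g
  have hδf : δf ≠ 0 := hf.shiftedEval_ne_zero hf'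
  have hδg : δg ≠ 0 := hg.shiftedEval_ne_zero hg'
  set a := L - f.natDegree
  set b := L - (n - m) - g.natDegree
  set P := C δg * (X ^ a * f)
  set Q := C δf * (X ^ b * g)
  have hP : P.natDegree = L := by
    rw [natDegree_C_mul hδg, natDegree_X_pow_mul _ hf0]; omega
  have hQ : Q.natDegree < L := by
    rw [natDegree_C_mul hδf, natDegree_X_pow_mul _ hg0]; omega
  have hPQ : (P - Q).natDegree = L := by
    rw [natDegree_sub_eq_left_of_natDegree_lt (hP ▸ hQ), hP]
  refine ⟨P - Q, fun h => ?_, fun j hj hjn => ?_, hPQ⟩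
  · rw [h, natDegree_zero] at hPQ; omega
  rw [hPQ] at hjn
  rw [map_sub, shiftedEval_C_mul_X_pow_mul, shiftedEval_C_mul_X_pow_mul]
  obtain hjn | hjn := Nat.lt_or_eq_of_le hjn
  · rw [hf (j + a) (by omega) (by omega), hg (j + b) (by omega) (by omega)]
    ring
  · rw [show j + a = n + 1 - f.natDegree by omega, show j + b = m + 1 - g.natDegree by omega]
    ring

lemma MasseyWitness.LC_succ_le {n : ℕ} (hw : MasseyWitness s n) :
    LC s (n + 1) ≤ max (LC s n) (n + 1 - LC s n) := by
  obtain ⟨f, hf0, hf, hdeg⟩ := exists_annihilates_natDegree_eq_LC s n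
  by_cases hf' : Annihilates s (n + 1) f
  · exact (hdeg ▸ LC_le_natDegree hf0 hf').trans (le_max_left _ _)
  rcases hw with h0 | ⟨m, hmn, g, hg, hg', hdeg_g⟩
  · rw [h0]
    exact (LC_le_self s _).trans (by simp)
  · obtain ⟨h, hh0, hh, hdeg_h⟩ := exists_annihilates_succ hf hf' hg hg' hmn
      (L := max (LC s n) (n + 1 - LC s n)) (by omega) (by omega)
    exact hdeg_h ▸ LC_le_natDegree hh0 hh

lemma MasseyWitness.succ {n : ℕ} (hw : MasseyWitness s n) : MasseyWitness s (n + 1) := by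
  obtain heq | hlt := (LC_mono s (n.le_add_right 1)).eq_or_lt
  · rcases hw with h0 | ⟨m, hmn, g, hg, hg', hdeg_g⟩
    · exact Or.inl (heq ▸ h0)
    · exact Or.inr ⟨m, hmn.trans n.lt_add_one, g, hg, hg', heq ▸ hdeg_g⟩
  · obtain ⟨f, hf0, hf, hdeg⟩ := exists_annihilates_natDegree_eq_LC s n
    have hf' : ¬ Annihilates s (n + 1) f :=
      fun h => (LC_le_natDegree hf0 h).not_gt (hdeg ▸ hlt)
    have := hw.LC_succ_le
    exact Or.inr ⟨n, n.lt_add_one, f, hf, hf', by omega⟩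

variable (s) in
lemma masseyWitness (n : ℕ) : MasseyWitness s n := by
  induction n with
  | zero => exact Or.inl (LC_zero s)
  | succ n ih => exact ih.succ

variable (s) in
theorem LC_succ_le_max (n : ℕ) : LC s (n + 1) ≤ max (LC s n) (n + 1 - LC s n) :=
  (masseyWitness s n).LC_succ_le

end IsDomain

lemma sum_Icc_add_mul_self_le {L : ℕ → ℕ} (hL : Monotone L)
    (hstep : ∀ n, L (n + 1) ≤ max (L n) (n + 1 - L n)) (h0 : L 0 = 0) (n : ℕ) :
    ∑ i ∈ Icc 1 n, L i + L n * L n ≤ L n * (n + 1) := by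
  induction n with
  | zero => simp [h0]
  | succ n ih =>
    rw [sum_Icc_succ_top (by omega)]
    obtain heq | hlt := (hL (n.le_add_right 1)).eq_or_lt
    · rw [← heq]
      nlinarith
    · have hjump : L n + L (n + 1) ≤ n + 1 := by have := hstep n; omega
      nlinarith [Nat.mul_le_mul hlt.le hjump]

lemma sum_Icc_le_sq_div_four {L : ℕ → ℕ} (hL : Monotone L)
    (hstep : ∀ n, L (n + 1) ≤ max (L n) (n + 1 - L n)) (h0 : L 0 = 0) (n : ℕ) :
    ∑ i ∈ Icc 1 n, L i ≤ (n + 1) ^ 2 / 4 := by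
  have := sum_Icc_add_mul_self_le hL hstep h0 n
  rw [Nat.le_div_iff_mul_le four_pos]
  zify at this ⊢
  nlinarith [sq_nonneg ((n : ℤ) + 1 - 2 * L n)]

end LinearComplexity

theorem LC_sum_le {D : Type*} [CommRing D] [IsDomain D] (s : ℕ → D) (n : ℕ) :
    ∑ i ∈ Finset.Icc 1 n, LC s i ≤ (n + 1) ^ 2 / 4 :=
  LinearComplexity.sum_Icc_le_sq_div_four (LinearComplexity.LC_mono s)
    (LinearComplexity.LC_succ_le_max s) (LinearComplexity.LC_zero s) n
end

section
/- Let D be an integral domain and s ∈ Dⁿ with LC_i the linear complexity of the i-th prefix. Then s has a perfect linear complexity profile (LC_i = ⌊(i+1)/2⌋ for all 1 ≤ i ≤ n) if and only if LC_i ≥ ⌊(i+1)/2⌋ for all 1 ≤ i ≤ n. -/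
/-!
The nontrivial direction is the upper bound `LC_i ≤ ⌊(i+1)/2⌋`, by induction on `i`. Its engine
is the Berlekamp–Massey step: if `f` annihilates `s` up to `i` and `g` annihilates it up to
`m < i` but not up to `m + 1`, then cross-multiplying by the two discrepancies and shifting gives
a combination of `f` and `g` annihilating up to `i + 1`, of degree `max (deg f) (deg g + i - m)`.
Hence `LC_{i+1} ≤ max LC_i (LC_m + i - m)` whenever the profile jumps at `m`. The lower bound
makes the profile jump after every even `m`, and the last such `m` below `i` gives the bound.
-/

open Polynomial

section

variable {D : Type*} [CommRing D]

noncomputable def shiftSum (s : ℕ → D) (t : ℕ) : D[X] →ₗ[D] D :=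
  lsum fun k => LinearMap.mulRight D (s (t + k))

theorem shiftSum_apply (s : ℕ → D) (t : ℕ) (p : D[X]) :
    shiftSum s t p = ∑ k ∈ Finset.range (p.natDegree + 1), p.coeff k * s (t + k) :=
  sum_over_range p fun _ => zero_mul _

theorem shiftSum_mul_X_pow (s : ℕ → D) (t u : ℕ) (p : D[X]) :
    shiftSum s t (p * X ^ u) = shiftSum s (t + u) p := by
  induction p using Polynomial.induction_on' with
  | add p q hp hq => rw [add_mul, map_add, map_add, hp, hq]
  | monomial n a =>
    simp only [shiftSum, lsum_apply, LinearMap.mulRight_apply, monomial_mul_X_pow,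
      sum_monomial_index, zero_mul]
    rw [add_comm n, add_assoc]

theorem isAnnihilator_iff_s16 {s : ℕ → D} {n : ℕ} {f : D[X]} :
    IsAnnihilator s n f ↔
      f = 0 ∨ ∀ j, f.natDegree + 1 ≤ j → j ≤ n → shiftSum s (j - f.natDegree) f = 0 := by
  simp only [IsAnnihilator, shiftSum_apply]

theorem IsAnnihilator.succ {s : ℕ → D} {n : ℕ} {f : D[X]} (hf : IsAnnihilator s n f)
    (hδ : shiftSum s (n + 1 - f.natDegree) f = 0) : IsAnnihilator s (n + 1) f := by
  rw [isAnnihilator_iff_s16] at hf ⊢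
  refine hf.imp_right fun hf j hj hjn => ?_
  rcases Nat.lt_or_eq_of_le hjn with hjn | rfl
  · exact hf j hj (Nat.lt_succ_iff.mp hjn)
  · exact hδ

theorem LC_le_natDegree_s16 {s : ℕ → D} {n : ℕ} {f : D[X]} (hf : f ≠ 0)
    (ha : IsAnnihilator s n f) : LC s n ≤ f.natDegree :=
  Nat.sInf_le ⟨f, hf, ha, rfl⟩

section Nontrivial

variable [Nontrivial D]

theorem isAnnihilator_X_pow (s : ℕ → D) (n : ℕ) : IsAnnihilator s n (X ^ n) :=
  Or.inr fun j hj hjn => by rw [natDegree_X_pow] at hj; omega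

theorem exists_isAnnihilator_natDegree_eq_LC (s : ℕ → D) (n : ℕ) :
    ∃ f : D[X], f ≠ 0 ∧ IsAnnihilator s n f ∧ f.natDegree = LC s n := by
  have hn : n ∈ {d | ∃ f : D[X], f ≠ 0 ∧ IsAnnihilator s n f ∧ f.natDegree = d} :=
    ⟨X ^ n, (monic_X_pow n).ne_zero, isAnnihilator_X_pow s n, natDegree_X_pow n⟩
  exact Nat.sInf_mem ⟨n, hn⟩

theorem LC_le_self (s : ℕ → D) (n : ℕ) : LC s n ≤ n := by
  simpa using LC_le_natDegree_s16 (monic_X_pow n).ne_zero (isAnnihilator_X_pow s n)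

end Nontrivial

theorem exists_isAnnihilator_succ_of_shiftSum_ne_zero [IsDomain D] {s : ℕ → D} {i m : ℕ}
    (hm : m < i) {f g : D[X]} (hf : f ≠ 0) (hfi : IsAnnihilator s i f)
    (hgm : IsAnnihilator s m g) (hδ : shiftSum s (m + 1 - g.natDegree) g ≠ 0) :
    ∃ h : D[X], h ≠ 0 ∧ IsAnnihilator s (i + 1) h ∧
      h.natDegree = max f.natDegree (g.natDegree + (i - m)) := by
  have hg : g ≠ 0 := by rintro rfl; simp at hδ
  rw [isAnnihilator_iff_s16] at hfi hgm
  replace hfi := hfi.resolve_left hf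
  replace hgm := hgm.resolve_left hg
  set a := f.natDegree
  set b := g.natDegree
  set N := max a (b + (i - m))
  have haN : a ≤ N := le_max_left _ _
  have hbN : b + (i - m) ≤ N := le_max_right _ _
  set δ := shiftSum s (i + 1 - a) f
  set δ' := shiftSum s (m + 1 - b) g
  -- cancel the discrepancy `δ` of `f` at `i + 1` against the one of `g` at `m + 1`, shifted by
  -- `i - m`; cross-multiplying replaces the division of the field case
  set h := C δ' * (f * X ^ (N - a)) - C δ * (g * X ^ (N - (b + (i - m))))
  have hcoeff : h.coeff N = δ' * f.coeff a := by
    have hg0 : g.coeff (b + (i - m)) = 0 := coeff_eq_zero_of_natDegree_lt (by omega)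
    simp only [h, coeff_sub, coeff_C_mul, coeff_mul_X_pow', if_pos (Nat.sub_le _ _),
      Nat.sub_sub_self haN, Nat.sub_sub_self hbN, hg0, mul_zero, sub_zero]
  have hcoeff_ne : h.coeff N ≠ 0 := hcoeff ▸ mul_ne_zero hδ (leadingCoeff_ne_zero.2 hf)
  have hdeg : h.natDegree = N := by
    refine natDegree_eq_of_le_of_coeff_ne_zero ((natDegree_sub_le _ _).trans (max_le ?_ ?_))
      hcoeff_ne <;>
    refine (natDegree_C_mul_le _ _).trans (natDegree_mul_le.trans ?_) <;>
    grw [natDegree_X_pow_le] <;> omega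
  have hshift : ∀ j, N ≤ j →
      shiftSum s (j - N) h = δ' * shiftSum s (j - a) f - δ * shiftSum s (j - (i - m) - b) g := by
    intro j hj
    simp only [h, map_sub, ← smul_eq_C_mul, map_smul, shiftSum_mul_X_pow, smul_eq_mul]
    congr 4 <;> omega
  refine ⟨h, fun h0 => hcoeff_ne (by rw [h0, coeff_zero]), ?_, hdeg⟩
  refine isAnnihilator_iff_s16.2 (Or.inr fun j hj hji => ?_)
  rw [hdeg] at hj ⊢
  rw [hshift j (by omega)]
  rcases Nat.lt_or_eq_of_le hji with hji | rfl
  · rw [hfi j (by omega) (by omega), hgm (j - (i - m)) (by omega) (by omega), mul_zero, mul_zero,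
      sub_zero]
  · rw [show i + 1 - (i - m) - b = m + 1 - b by omega, mul_comm]
    exact sub_self _

variable [IsDomain D]

theorem LC_succ_le_max_of_LC_lt_LC_succ (s : ℕ → D) {i m : ℕ} (hm : m < i)
    (hjump : LC s m < LC s (m + 1)) : LC s (i + 1) ≤ max (LC s i) (LC s m + (i - m)) := by
  obtain ⟨f, hf, hfi, hfd⟩ := exists_isAnnihilator_natDegree_eq_LC s i
  obtain ⟨g, hg, hgm, hgd⟩ := exists_isAnnihilator_natDegree_eq_LC s m
  have hδ : shiftSum s (m + 1 - g.natDegree) g ≠ 0 := fun hδ =>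
    (LC_le_natDegree_s16 hg (hgm.succ hδ)).not_gt (hgd ▸ hjump)
  obtain ⟨h, hh, hhi, hhd⟩ := exists_isAnnihilator_succ_of_shiftSum_ne_zero hm hf hfi hgm hδ
  calc LC s (i + 1) ≤ h.natDegree := LC_le_natDegree_s16 hh hhi
    _ = max (LC s i) (LC s m + (i - m)) := by rw [hhd, hfd, hgd]

theorem LC_le_of_forall_le_LC {s : ℕ → D} {n : ℕ}
    (hge : ∀ i, 1 ≤ i → i ≤ n → (i + 1) / 2 ≤ LC s i) : ∀ i ≤ n, LC s i ≤ (i + 1) / 2 := by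
  intro i
  induction i using Nat.strong_induction_on with
  | _ i IH =>
    intro hin
    match i with
    | 0 | 1 => exact (LC_le_self s _).trans (by norm_num)
    | k + 2 =>
      -- `m` is the last even index below `k + 1`: by induction `LC s m ≤ m / 2`, while the
      -- hypothesis forces `m / 2 + 1 ≤ LC s (m + 1)`
      set m := 2 * (k / 2)
      have hm := IH m (by omega) (by omega)
      have hjump : LC s m < LC s (m + 1) := by
        have := hge (m + 1) (by omega) (by omega)
        omega
      have hstep : LC s (k + 2) ≤ _ :=
        LC_succ_le_max_of_LC_lt_LC_succ s (i := k + 1) (by omega) hjump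
      have hk := IH (k + 1) (by omega) (by omega)
      omega

end

theorem plcp_iff_ge {D : Type*} [CommRing D] [IsDomain D] (s : ℕ → D) (n : ℕ) :
    (∀ i, 1 ≤ i → i ≤ n → LC s i = (i + 1) / 2) ↔
      (∀ i, 1 ≤ i → i ≤ n → (i + 1) / 2 ≤ LC s i) :=
  ⟨fun h i h1 hi => (h i h1 hi).ge,
    fun hge i h1 hi => le_antisymm (LC_le_of_forall_le_LC hge i hi) (hge i h1 hi)⟩
end
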